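/- Let (A, ≺, ≻) be a pre-alternative algebra and α, β: A → A two commuting pre-alternative algebra morphisms. Define x ≺' y = α(x) ≺ β(y) and x ≻' y = α(x) ≻ β(y). Then (A, ≺', ≻', α, β) is a BiHom-pre-alternative algebra (the Yau twist). -/
import Mathlib


variable {K : Type*} [Field K] {A : Type*} [AddCommGroup A] [Module K A]
  {V : Type*} [AddCommGroup V] [Module K V]

/-- The right BiHom-associator of a pair of bilinear operations `p = ≺`, `s = ≻`. -/
def preAsR (p s : A →ₗ[K] A →ₗ[K] A) (α β : A →ₗ[K] A) (x y z : A) : A :=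
  p (p x y) (β z) - p (α x) (p y z + s y z)

/-- The middle BiHom-associator. -/
def preAsM (p s : A →ₗ[K] A →ₗ[K] A) (α β : A →ₗ[K] A) (x y z : A) : A :=
  p (s x y) (β z) - s (α x) (p y z)

/-- The left BiHom-associator. -/
def preAsL (p s : A →ₗ[K] A →ₗ[K] A) (α β : A →ₗ[K] A) (x y z : A) : A :=
  s (p x y + s x y) (β z) - s (α x) (s y z)

/-- A BiHom-pre-alternative algebra structure on `A`, with `p = ≺` and `s = ≻`. -/
structure IsBiHomPreAlternative (p s : A →ₗ[K] A →ₗ[K] A) (α β : A →ₗ[K] A) : Prop where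
  hαβ : ∀ x, α (β x) = β (α x)
  hαp : ∀ x y, α (p x y) = p (α x) (α y)
  hαs : ∀ x y, α (s x y) = s (α x) (α y)
  hβp : ∀ x y, β (p x y) = p (β x) (β y)
  hβs : ∀ x y, β (s x y) = s (β x) (β y)
  hr : ∀ x y z, preAsR p s α β x (β y) (α z) + preAsR p s α β x (β z) (α y) = 0
  hl : ∀ x y z, preAsL p s α β (β x) (α y) z + preAsL p s α β (β y) (α x) z = 0
  hmr : ∀ x y z, preAsM p s α β (β x) (α y) z + preAsR p s α β (β y) (α x) z = 0
  hml : ∀ x y z, preAsM p s α β x (β y) (α z) + preAsL p s α β x (β z) (α y) = 0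

/-- The Yau twist of a pre-alternative algebra by two commuting
pre-alternative algebra morphisms is a BiHom-pre-alternative algebra. -/
theorem yauTwist_preAlternative
    (p s : A →ₗ[K] A →ₗ[K] A) (α β : A →ₗ[K] A)
    (hr : ∀ x y, preAsR p s LinearMap.id LinearMap.id x y y = 0)
    (hl : ∀ x y, preAsL p s LinearMap.id LinearMap.id x x y = 0)
    (hmr : ∀ x y z, preAsM p s LinearMap.id LinearMap.id x y z +
      preAsR p s LinearMap.id LinearMap.id y x z = 0)
    (hml : ∀ x y z, preAsM p s LinearMap.id LinearMap.id x y z +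
      preAsL p s LinearMap.id LinearMap.id x z y = 0)
    (hαβ : ∀ x, α (β x) = β (α x))
    (hαp : ∀ x y, α (p x y) = p (α x) (α y))
    (hαs : ∀ x y, α (s x y) = s (α x) (α y))
    (hβp : ∀ x y, β (p x y) = p (β x) (β y))
    (hβs : ∀ x y, β (s x y) = s (β x) (β y)) :
    IsBiHomPreAlternative ((p.comp α).compl₂ β) ((s.comp α).compl₂ β) α β := by
  -- polarized versions
  have hr2 : ∀ x y z, preAsR p s LinearMap.id LinearMap.id x y z +
      preAsR p s LinearMap.id LinearMap.id x z y = 0 := by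
    intro x y z
    have h := hr x (y + z)
    have e : preAsR p s LinearMap.id LinearMap.id x (y + z) (y + z) =
        preAsR p s LinearMap.id LinearMap.id x y y +
        preAsR p s LinearMap.id LinearMap.id x z z +
        (preAsR p s LinearMap.id LinearMap.id x y z +
         preAsR p s LinearMap.id LinearMap.id x z y) := by
      simp [preAsR, map_add]; abel
    rw [e, hr x y, hr x z] at h
    simpa using h
  have hl2 : ∀ x y z, preAsL p s LinearMap.id LinearMap.id x y z +
      preAsL p s LinearMap.id LinearMap.id y x z = 0 := by
    intro x y z
    have h := hl (x + y) z
    have e : preAsL p s LinearMap.id LinearMap.id (x + y) (x + y) z =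
        preAsL p s LinearMap.id LinearMap.id x x z +
        preAsL p s LinearMap.id LinearMap.id y y z +
        (preAsL p s LinearMap.id LinearMap.id x y z +
         preAsL p s LinearMap.id LinearMap.id y x z) := by
      simp [preAsL, map_add]; abel
    rw [e, hl x z, hl y z] at h
    simpa using h
  constructor
  · exact hαβ
  · intro x y; simp [hαp, hαβ]
  · intro x y; simp [hαs, hαβ]
  · intro x y; simp [hβp, hαβ]
  · intro x y; simp [hβs, hαβ]
  · intro x y z
    have h := hr2 (α (α x)) (α (β (β y))) (α (β (β z)))
    simp only [preAsR, preAsM, preAsL, LinearMap.compl₂_apply, LinearMap.comp_apply,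
      LinearMap.id_coe, id_eq, map_add, LinearMap.add_apply, hαp, hαs, hβp, hβs, hαβ] at h ⊢
    abel_nf at h ⊢
    exact h
  · intro x y z
    have h := hl2 (α (α (β x))) (α (α (β y))) (β (β z))
    simp only [preAsR, preAsM, preAsL, LinearMap.compl₂_apply, LinearMap.comp_apply,
      LinearMap.id_coe, id_eq, map_add, LinearMap.add_apply, hαp, hαs, hβp, hβs, hαβ] at h ⊢
    abel_nf at h ⊢
    exact h
  · intro x y z
    have h := hmr (α (α (β x))) (α (α (β y))) (β (β z))
    simp only [preAsR, preAsM, preAsL, LinearMap.compl₂_apply, LinearMap.comp_apply,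
      LinearMap.id_coe, id_eq, map_add, LinearMap.add_apply, hαp, hαs, hβp, hβs, hαβ] at h ⊢
    abel_nf at h ⊢
    exact h
  · intro x y z
    have h := hml (α (α x)) (α (β (β y))) (α (β (β z)))
    simp only [preAsR, preAsM, preAsL, LinearMap.compl₂_apply, LinearMap.comp_apply,
      LinearMap.id_coe, id_eq, map_add, LinearMap.add_apply, hαp, hαs, hβp, hβs, hαβ] at h ⊢
    abel_nf at h ⊢
    exact h
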